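/- arXiv:1711.03886 — 4 statements merged into one kernel-verified Lean document; each statement's English description precedes it below -/
import Mathlib

section
/- Let n, k, k' be natural numbers with k ≤ k', let B be a predicate on finite subsets of Fin n, and let H be a finite family of functions from Fin n to Fin k' such that for every finite set S ⊆ Fin n with |S| ≤ k' there exists h ∈ H that is injective on S. Then the following are equivalent: (i) there exists a finite set S ⊆ Fin n with |S| ≤ k such that B(S) holds; (ii) there exists a finite set S ⊆ Fin n with |S| ≤ k' such that for every h ∈ H there exists a finite set T ⊆ Fin k' with |T| ≤ k and B(S ∩ h⁻¹(T)). -/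
/-! Given a witness `S` with `|S| ≤ k`, every `h` works with `T = h(S)`, since `S ∩ h⁻¹(h(S)) = S`.
Conversely, for a witness `S` of size at most `k'` choose `h ∈ H` injective on `S`: then
`S ∩ h⁻¹(T)` injects into `T`, so it is a set of size at most `k` satisfying `B`. -/

namespace Finset

variable {α β : Type*}

theorem filter_mem_image_self [DecidableEq β] (f : α → β) (S : Finset α) :
    S.filter (fun a => f a ∈ S.image f) = S :=
  filter_true_of_mem fun _ ha => mem_image_of_mem f ha

theorem card_filter_mem_le_of_injOn (f : α → β) (S : Finset α) (T : Finset β)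
    [DecidablePred (fun a => f a ∈ T)] (hf : Set.InjOn f S) :
    (S.filter (fun a => f a ∈ T)).card ≤ T.card :=
  card_le_card_of_injOn f (fun _ ha => (mem_filter.1 ha).2)
    (hf.mono (coe_subset.2 (filter_subset _ S)))

end Finset

/-- Let `k ≤ k'` and let `H` be a family of functions `Fin n → Fin k'`
such that every set of size at most `k'` is mapped injectively by some `h ∈ H`.
Then `B` has a satisfying set of size at most `k` iff there is a set `S` of size
at most `k'` such that for every `h ∈ H` some `T ⊆ Fin k'` with `|T| ≤ k`
satisfies `B (S ∩ h⁻¹(T))`, where `S ∩ h⁻¹(T)` is `S.filter (fun i => h i ∈ T)`. -/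
theorem stmt_5 (n k k' : ℕ) (hkk' : k ≤ k') (B : Finset (Fin n) → Prop)
    (H : Finset (Fin n → Fin k'))
    (hperfect : ∀ S : Finset (Fin n), S.card ≤ k' →
      ∃ h ∈ H, Set.InjOn h (S : Set (Fin n))) :
    (∃ S : Finset (Fin n), S.card ≤ k ∧ B S) ↔
    (∃ S : Finset (Fin n), S.card ≤ k' ∧
      ∀ h ∈ H, ∃ T : Finset (Fin k'), T.card ≤ k ∧
        B (S.filter (fun i => h i ∈ T))) := by
  constructor
  · rintro ⟨S, hS, hB⟩
    refine ⟨S, hS.trans hkk', fun h _ => ⟨S.image h, Finset.card_image_le.trans hS, ?_⟩⟩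
    rwa [Finset.filter_mem_image_self]
  · rintro ⟨S, hS, hwitness⟩
    obtain ⟨h, hH, hinj⟩ := hperfect S hS
    obtain ⟨T, hT, hB⟩ := hwitness h hH
    exact ⟨_, (Finset.card_filter_mem_le_of_injOn h S T hinj).trans hT, hB⟩
end

section
/- Let F be a field, let k ≤ D be positive integers, let α : Fin D → F be injective with α(i) ≠ 0 for every i, and define RS : (Fin k → F) → (Fin D → F) by RS(m)(i) = Σ_{j : Fin k} (α i)^{j+1} · m(j). Let G be a simple graph on the vertex set Fin k → F, and suppose v : Fin k → (Fin k → F) satisfies G.Adj (v a) (v b) for all a ≠ b (a k-clique in G). Define T = {(j, g_j) : j ∈ Fin D} ⊆ (Fin D) × (Fin k → F), where g_j : Fin k → F is given by g_j(i) = RS(v i)(j). Then |T| = D, T is a feasible solution of the associated Threshold Set instance; that is: for every j : Fin D, |T ∩ S_j| ≤ 1, and for every subset X ⊆ Fin D with |X| = k, all a, b : Fin k with a < b, and all u, w : Fin k → F with ¬G.Adj(u, w), we have |T ∩ S_{X,a,b,u,w}| ≤ k − 1. -/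
/-! The codeword `RS m` is a polynomial of degree at most `k` without constant term evaluated at
the distinct nonzero points `α i`, so two codewords agreeing in `k` positions are equal. The set `T`
is the graph of `j ↦ (RS (v i) j)ᵢ`, so it meets each `S_j` once; if it met `S_{X,a,b,u,w}` in `k`
points, then `RS (v a)` and `RS u` (resp. `RS (v b)` and `RS w`) would agree in `k` positions,
forcing `u = v a` and `w = v b`, which are adjacent. -/

open Finset

section Vandermonde

variable {F : Type*} [Field F] {k : ℕ}

/-- After dividing by `x i ≠ 0` this is an invertible Vandermonde system. -/
theorem eq_of_forall_sum_pow_succ_mul_eq {x : Fin k → F} (hx_inj : Function.Injective x)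
    (hx_ne : ∀ i, x i ≠ 0) {m m' : Fin k → F}
    (h : ∀ i, ∑ j : Fin k, x i ^ ((j : ℕ) + 1) * m j =
      ∑ j : Fin k, x i ^ ((j : ℕ) + 1) * m' j) :
    m = m' := by
  refine sub_eq_zero.mp (Matrix.eq_zero_of_forall_index_sum_pow_mul_eq_zero hx_inj fun i => ?_)
  have hx_mul : x i * ∑ j : Fin k, x i ^ (j : ℕ) * (m - m') j = 0 := by
    simp only [mul_sum, Pi.sub_apply, mul_sub, sum_sub_distrib, ← mul_assoc, ← pow_succ', h i,
      sub_self]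
  exact (mul_eq_zero.mp hx_mul).resolve_left (hx_ne i)

theorem eq_of_forall_mem_sum_pow_succ_mul_eq {D : ℕ} {α : Fin D → F}
    (hα_inj : Function.Injective α) (hα_ne : ∀ i, α i ≠ 0) {J : Finset (Fin D)}
    (hJ : k ≤ #J) {m m' : Fin k → F}
    (h : ∀ i ∈ J, ∑ j : Fin k, α i ^ ((j : ℕ) + 1) * m j =
      ∑ j : Fin k, α i ^ ((j : ℕ) + 1) * m' j) :
    m = m' := by
  obtain ⟨J', hJ'J, hJ'⟩ := exists_subset_card_eq hJ
  let e := J'.orderEmbOfFin hJ'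
  exact eq_of_forall_sum_pow_succ_mul_eq (hα_inj.comp e.injective) (fun i => hα_ne (e i))
    fun i => h (e i) (hJ'J (J'.orderEmbOfFin_mem hJ' i))

end Vandermonde

theorem card_filter_image_graph {ι β : Type*} [Fintype ι] [DecidableEq ι] [DecidableEq β]
    (g : ι → β) (p : ι × β → Prop) [DecidablePred p] :
    #((univ.image fun i => (i, g i)).filter p) = #(univ.filter fun i => p (i, g i)) := by
  rw [filter_image, card_image_of_injective _ fun i i' h => congrArg Prod.fst h]

theorem stmt_7_general (F : Type*) [Field F] [DecidableEq F] (k D : ℕ)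
    (α : Fin D → F) (hα_inj : Function.Injective α) (hα_ne : ∀ i, α i ≠ 0)
    (RS : (Fin k → F) → (Fin D → F))
    (hRS : ∀ m i, RS m i = ∑ j : Fin k, (α i) ^ ((j : ℕ) + 1) * m j)
    (G : SimpleGraph (Fin k → F))
    (v : Fin k → (Fin k → F)) (hv : ∀ a b, a ≠ b → G.Adj (v a) (v b))
    (T : Finset (Fin D × (Fin k → F)))
    (hT : T = Finset.image (fun j : Fin D => (j, fun i : Fin k => RS (v i) j))
      Finset.univ) :
    T.card = D ∧
    (∀ j : Fin D, (T.filter (fun p => p.1 = j)).card ≤ 1) ∧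
    (∀ X : Finset (Fin D), X.card = k → ∀ a b : Fin k, a < b →
      ∀ u w : Fin k → F, ¬ G.Adj u w →
        (T.filter (fun p => p.1 ∈ X ∧ p.2 a = RS u p.1 ∧ p.2 b = RS w p.1)).card
          ≤ k - 1) := by
  have hRS_eq : ∀ {m m'} {J : Finset (Fin D)}, k ≤ #J → (∀ j ∈ J, RS m j = RS m' j) → m = m' :=
    fun hJ h => eq_of_forall_mem_sum_pow_succ_mul_eq hα_inj hα_ne hJ fun j hj => by
      simpa only [hRS] using h j hj
  subst hT
  refine ⟨?_, fun j => ?_, fun X _ a b hab u w hnadj => ?_⟩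
  · simpa using card_filter_image_graph (fun j i => RS (v i) j) fun _ => True
  · simp [card_filter_image_graph, filter_eq']
  · rw [card_filter_image_graph]
    set J := univ.filter fun j => j ∈ X ∧ RS (v a) j = RS u j ∧ RS (v b) j = RS w j
    by_contra! hJ
    have hagree (j) (hj : j ∈ J) := (mem_filter.mp hj).2.2
    have hu : v a = u := hRS_eq (by omega) fun j hj => (hagree j hj).1
    have hw : v b = w := hRS_eq (by omega) fun j hj => (hagree j hj).2
    exact hnadj (hu ▸ hw ▸ hv a b hab.ne)

/-- Given a `k`-clique `v` in a graph `G` on the vertex set `Fin k → F`,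
the set `T = {(j, g_j) : j : Fin D}` with `g_j i = RS (v i) j` has cardinality `D`
and is a feasible solution of the associated Threshold Set instance: it meets each
set `S_j = {(j, g)}` (of weight 1) in at most one element, and each set
`S_{X,a,b,u,w} = {(j, g) : j ∈ X, g a = RS u j, g b = RS w j}` (of weight `k - 1`,
for `|X| = k`, `a < b`, and nonadjacent `u, w`) in at most `k - 1` elements. -/
theorem stmt_7 (F : Type*) [Field F] [DecidableEq F] (k D : ℕ) (hk : 0 < k) (hkD : k ≤ D)
    (α : Fin D → F) (hα_inj : Function.Injective α) (hα_ne : ∀ i, α i ≠ 0)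
    (RS : (Fin k → F) → (Fin D → F))
    (hRS : ∀ m i, RS m i = ∑ j : Fin k, (α i) ^ ((j : ℕ) + 1) * m j)
    (G : SimpleGraph (Fin k → F)) [DecidableRel G.Adj]
    (v : Fin k → (Fin k → F)) (hv : ∀ a b, a ≠ b → G.Adj (v a) (v b))
    (T : Finset (Fin D × (Fin k → F)))
    (hT : T = Finset.image (fun j : Fin D => (j, fun i : Fin k => RS (v i) j))
      Finset.univ) :
    T.card = D ∧
    (∀ j : Fin D, (T.filter (fun p => p.1 = j)).card ≤ 1) ∧
    (∀ X : Finset (Fin D), X.card = k → ∀ a b : Fin k, a < b →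
      ∀ u w : Fin k → F, ¬ G.Adj u w →
        (T.filter (fun p => p.1 ∈ X ∧ p.2 a = RS u p.1 ∧ p.2 b = RS w p.1)).card
          ≤ k - 1) :=
  stmt_7_general F k D α hα_inj hα_ne RS hRS G v hv T hT
end

section
/- Let F be a field, let k ≤ D be positive integers with k ≥ 2, let α : Fin D → F be injective with α(i) ≠ 0 for every i, and define RS : (Fin k → F) → (Fin D → F) by RS(m)(i) = Σ_{j : Fin k} (α i)^{j+1} · m(j). Let G be a simple graph on the vertex set Fin k → F. Suppose T is a finite subset of (Fin D) × (Fin k → F) that is a feasible solution of the associated Threshold Set instance (i.e., |T ∩ S_j| ≤ 1 for every j : Fin D, and |T ∩ S_{X,a,b,u,w}| ≤ k − 1 for every tuple (X, a, b, u, w) with X ⊆ Fin D, |X| = k, a < b in Fin k, and ¬G.Adj(u, w)), and suppose |T| ≥ k. Then G contains a k-clique: there exists v : Fin k → (Fin k → F) such that G.Adj (v a) (v b) for all a ≠ b. -/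
/-!
Only one point of `T` lies over each coordinate `j`, so `|T| ≥ k` yields points `(x i, g i)`,
`i : Fin k`, with distinct coordinates `x i`. The matrix `(α (x i) ^ (j + 1))` is a diagonal
matrix with nonzero entries times a Vandermonde matrix, hence invertible, so for every `a` some
message `u a` has `RS (u a) (x i) = g i a` for all `i`. If `u a` and `u b` were nonadjacent, all
`k` points would lie in `S_{X,a,b,u a,u b}` with `X = {x i}`, exceeding its weight `k - 1`.
-/

open Finset

theorem Finset.injOn_fst_of_card_filter_fst_le_one {α β : Type*} [DecidableEq α]
    {T : Finset (α × β)} (hT : ∀ a, (T.filter fun p => p.1 = a).card ≤ 1) :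
    Set.InjOn Prod.fst (T : Set (α × β)) := fun p hp q hq hpq =>
  card_le_one.mp (hT p.1) p (mem_filter.mpr ⟨hp, rfl⟩) q (mem_filter.mpr ⟨hq, hpq.symm⟩)

section Interpolation

variable {F : Type*} [Field F] {k : ℕ} {β : Fin k → F}

theorem Matrix.det_of_pow_succ_ne_zero (hβ : Function.Injective β) (hβ0 : ∀ i, β i ≠ 0) :
    (Matrix.of fun i j : Fin k => β i ^ ((j : ℕ) + 1)).det ≠ 0 := by
  have hfactor : (Matrix.of fun i j : Fin k => β i ^ ((j : ℕ) + 1)) =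
      Matrix.diagonal β * Matrix.vandermonde β := by
    ext i j
    simp [Matrix.diagonal_mul, Matrix.vandermonde, pow_succ']
  rw [hfactor, Matrix.det_mul, Matrix.det_diagonal]
  exact mul_ne_zero (prod_ne_zero_iff.mpr fun i _ => hβ0 i)
    (Matrix.det_vandermonde_ne_zero_iff.mpr hβ)

theorem exists_sum_pow_succ_mul_eq (hβ : Function.Injective β) (hβ0 : ∀ i, β i ≠ 0)
    (y : Fin k → F) :
    ∃ m : Fin k → F, ∀ i, ∑ j : Fin k, β i ^ ((j : ℕ) + 1) * m j = y i := by
  have hunit :=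
    (Matrix.isUnit_iff_isUnit_det _).mpr (Matrix.det_of_pow_succ_ne_zero hβ hβ0).isUnit
  obtain ⟨m, hm⟩ := Matrix.mulVec_surjective_iff_isUnit.mpr hunit y
  exact ⟨m, fun i => by simpa [Matrix.mulVec, dotProduct] using congrFun hm i⟩

end Interpolation

theorem stmt_8_general (F : Type*) [Field F] [DecidableEq F] (k D : ℕ)
    (α : Fin D → F) (hα_inj : Function.Injective α) (hα_ne : ∀ i, α i ≠ 0)
    (RS : (Fin k → F) → (Fin D → F))
    (hRS : ∀ m i, RS m i = ∑ j : Fin k, (α i) ^ ((j : ℕ) + 1) * m j)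
    (G : SimpleGraph (Fin k → F))
    (T : Finset (Fin D × (Fin k → F)))
    (hT1 : ∀ j : Fin D, (T.filter (fun p => p.1 = j)).card ≤ 1)
    (hT2 : ∀ X : Finset (Fin D), X.card = k → ∀ a b : Fin k, a < b →
      ∀ u w : Fin k → F, ¬ G.Adj u w →
        (T.filter (fun p => p.1 ∈ X ∧ p.2 a = RS u p.1 ∧ p.2 b = RS w p.1)).card
          ≤ k - 1)
    (hTcard : k ≤ T.card) :
    ∃ v : Fin k → (Fin k → F), ∀ a b, a ≠ b → G.Adj (v a) (v b) := by
  obtain ⟨P⟩ : Nonempty (Fin k ↪ T) :=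
    Function.Embedding.nonempty_of_card_le (by simpa using hTcard)
  set x : Fin k → Fin D := fun i => (P i).1.1
  have hx : Function.Injective x := fun i j hij =>
    P.injective (Subtype.val_injective
      (injOn_fst_of_card_filter_fst_le_one hT1 (P i).2 (P j).2 hij))
  choose u hu using fun a => exists_sum_pow_succ_mul_eq (β := α ∘ x) (hα_inj.comp hx)
    (fun i => hα_ne _) (fun i => (P i).1.2 a)
  have hpair : ∀ a b, a < b → G.Adj (u a) (u b) := by
    intro a b hab
    by_contra hnadj
    have hle := hT2 (univ.image x) (by simp [card_image_of_injective _ hx]) a b hab _ _ hnadj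
    have hmem : ∀ i, (P i).1 ∈ T.filter fun p => p.1 ∈ univ.image x ∧
        p.2 a = RS (u a) p.1 ∧ p.2 b = RS (u b) p.1 := fun i =>
      mem_filter.mpr ⟨(P i).2, mem_image_of_mem x (mem_univ i),
        by rw [hRS]; exact (hu a i).symm, by rw [hRS]; exact (hu b i).symm⟩
    have hge := card_le_card_of_injOn (s := univ) (fun i => (P i).1) (fun i _ => hmem i)
      (fun i _ j _ hij => P.injective (Subtype.val_injective hij))
    rw [card_univ, Fintype.card_fin] at hge
    have hk_pos : 0 < k := a.pos
    omega
  refine ⟨u, fun a b hab => ?_⟩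
  rcases hab.lt_or_gt with hlt | hgt
  · exact hpair a b hlt
  · exact (hpair b a hgt).symm

/-- If `k ≥ 2` and `T` is a feasible solution of the Threshold Set
instance associated with a graph `G` on the vertex set `Fin k → F` (i.e. `T` meets
each set `S_j = {(j, g)}` in at most one element, and each set
`S_{X,a,b,u,w} = {(j, g) : j ∈ X, g a = RS u j, g b = RS w j}` with `|X| = k`,
`a < b`, and `u, w` nonadjacent, in at most `k - 1` elements) with `|T| ≥ k`,
then `G` contains a `k`-clique. -/
theorem stmt_8 (F : Type*) [Field F] [DecidableEq F] (k D : ℕ) (hk : 2 ≤ k) (hkD : k ≤ D)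
    (α : Fin D → F) (hα_inj : Function.Injective α) (hα_ne : ∀ i, α i ≠ 0)
    (RS : (Fin k → F) → (Fin D → F))
    (hRS : ∀ m i, RS m i = ∑ j : Fin k, (α i) ^ ((j : ℕ) + 1) * m j)
    (G : SimpleGraph (Fin k → F)) [DecidableRel G.Adj]
    (T : Finset (Fin D × (Fin k → F)))
    (hT1 : ∀ j : Fin D, (T.filter (fun p => p.1 = j)).card ≤ 1)
    (hT2 : ∀ X : Finset (Fin D), X.card = k → ∀ a b : Fin k, a < b →
      ∀ u w : Fin k → F, ¬ G.Adj u w →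
        (T.filter (fun p => p.1 ∈ X ∧ p.2 a = RS u p.1 ∧ p.2 b = RS w p.1)).card
          ≤ k - 1)
    (hTcard : k ≤ T.card) :
    ∃ v : Fin k → (Fin k → F), ∀ a b, a ≠ b → G.Adj (v a) (v b) :=
  stmt_8_general F k D α hα_inj hα_ne RS hRS G T hT1 hT2 hTcard
end

section
/- Let F be a field, let k ≤ D be positive integers with k ≥ 2, let α : Fin D → F be injective with α(i) ≠ 0 for every i, and define RS : (Fin k → F) → (Fin D → F) by RS(m)(i) = Σ_{j : Fin k} (α i)^{j+1} · m(j). Let G be a simple graph on the vertex set Fin k → F. Then the following are equivalent: (i) G contains a k-clique, i.e., there exists v : Fin k → (Fin k → F) with G.Adj (v a) (v b) for all a ≠ b; (ii) the associated Threshold Set instance has a feasible solution T ⊆ (Fin D) × (Fin k → F) with |T| ≥ k. Moreover, if (i) holds, then there is a feasible solution of cardinality exactly D. -/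
/-!
Restricted to any `k` evaluation points, the Reed–Solomon map `m ↦ (Σ_i α_j^(i+1) m_i)_j` is a
bijection: it is `j ↦ α_j · p(α_j)` for the polynomial `p` of degree `< k` with coefficients `m`,
and the `α_j` are distinct and nonzero, so this is polynomial interpolation.

Given a clique `v`, the rows `(j, (RS (v a) j)_a)` form a feasible solution with `D` elements:
if `k` of them met a set `S_{X,a,b,u,w}`, injectivity on `X` would force `v a = u`, `v b = w`,
which are nonadjacent. Conversely, a feasible solution has distinct first coordinates; choose `k`
of its rows `X` and interpolate each column `a` on `X` by a message `v a`. If `v a` and `v b` were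
nonadjacent, all `k` chosen rows would lie in `S_{X,a,b,v a,v b}`, whose weight is `k - 1`.
-/

open Polynomial Finset

/-- A finite set `T ⊆ Fin D × (Fin k → F)` is a feasible solution of the Threshold
Set instance associated with a Reed–Solomon encoding `RS` and a graph `G` on the
vertex set `Fin k → F`: `T` meets each set `S_j = {(j, g)}` (weight 1) in at most
one element, and each set `S_{X,a,b,u,w} = {(j, g) : j ∈ X, g a = RS u j, g b = RS w j}`
(weight `k - 1`, for `|X| = k`, `a < b`, `u, w` nonadjacent) in at most `k - 1`
elements. -/
def ThresholdFeasible (F : Type*) [Field F] [DecidableEq F] (k D : ℕ)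
    (RS : (Fin k → F) → (Fin D → F)) (G : SimpleGraph (Fin k → F))
    [DecidableRel G.Adj] (T : Finset (Fin D × (Fin k → F))) : Prop :=
  (∀ j : Fin D, (T.filter (fun p => p.1 = j)).card ≤ 1) ∧
  (∀ X : Finset (Fin D), X.card = k → ∀ a b : Fin k, a < b →
    ∀ u w : Fin k → F, ¬ G.Adj u w →
      (T.filter (fun p => p.1 ∈ X ∧ p.2 a = RS u p.1 ∧ p.2 b = RS w p.1)).card
        ≤ k - 1)

def reedSolomon {F : Type*} [Field F] {D : ℕ} (α : Fin D → F) (k : ℕ) (m : Fin k → F)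
    (j : Fin D) : F :=
  ∑ i : Fin k, α j ^ ((i : ℕ) + 1) * m i

section ReedSolomon

variable {F : Type*} [Field F] {k D : ℕ} {α : Fin D → F}

theorem reedSolomon_degreeLTEquiv (p : degreeLT F k) (j : Fin D) :
    reedSolomon α k (degreeLTEquiv F k p) j = α j * (p : F[X]).eval (α j) := by
  rw [reedSolomon, eval_eq_sum_degreeLTEquiv p.2, mul_sum]
  exact sum_congr rfl fun i _ => by ring

theorem eq_of_reedSolomon_eq_on (hα : Function.Injective α) (hα0 : ∀ j, α j ≠ 0)
    {X : Finset (Fin D)} (hX : k ≤ #X) {m m' : Fin k → F}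
    (h : ∀ j ∈ X, reedSolomon α k m j = reedSolomon α k m' j) : m = m' := by
  classical
  obtain ⟨p, rfl⟩ := (degreeLTEquiv F k).surjective m
  obtain ⟨p', rfl⟩ := (degreeLTEquiv F k).surjective m'
  have hdeg : ∀ q : degreeLT F k, (q : F[X]).degree < #(X.image α) := fun q => by
    rw [card_image_of_injective X hα]
    exact (mem_degreeLT.mp q.2).trans_le (by exact_mod_cast hX)
  refine congrArg _ (Subtype.ext (eq_of_degrees_lt_of_eval_finset_eq _ (hdeg p) (hdeg p') ?_))
  rintro _ hx
  obtain ⟨j, hj, rfl⟩ := mem_image.mp hx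
  have hj := h j hj
  rw [reedSolomon_degreeLTEquiv, reedSolomon_degreeLTEquiv] at hj
  exact mul_left_cancel₀ (hα0 j) hj

theorem exists_reedSolomon_eq_on (hα : Function.Injective α) (hα0 : ∀ j, α j ≠ 0)
    {X : Finset (Fin D)} (hX : #X ≤ k) (c : Fin D → F) :
    ∃ m : Fin k → F, ∀ j ∈ X, reedSolomon α k m j = c j := by
  set q := Lagrange.interpolate X α fun j => c j / α j
  have hq : q ∈ degreeLT F k :=
    mem_degreeLT.mpr ((Lagrange.degree_interpolate_lt _ hα.injOn).trans_le (by exact_mod_cast hX))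
  refine ⟨degreeLTEquiv F k ⟨q, hq⟩, fun j hj => ?_⟩
  rw [reedSolomon_degreeLTEquiv, Lagrange.eval_interpolate_at_node _ hα.injOn hj,
    mul_div_cancel₀ _ (hα0 j)]

end ReedSolomon

theorem exists_mk_mem_of_subset_image_fst {ι β : Type*} [DecidableEq ι] [Nonempty β]
    {T : Finset (ι × β)} {X : Finset ι} (hX : X ⊆ T.image Prod.fst) :
    ∃ g : ι → β, ∀ j ∈ X, (j, g j) ∈ T := by
  have : ∀ j ∈ X, ∃ y, (j, y) ∈ T := fun j hj => by
    obtain ⟨p, hp, rfl⟩ := mem_image.mp (hX hj)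
    exact ⟨p.2, hp⟩
  choose! g hg using this
  exact ⟨g, hg⟩

section CliqueSolution

variable {F : Type*} [DecidableEq F] {k D : ℕ}

def cliqueSolution (RS : (Fin k → F) → (Fin D → F)) (v : Fin k → Fin k → F) :
    Finset (Fin D × (Fin k → F)) :=
  univ.image fun j => (j, fun a => RS (v a) j)

theorem card_cliqueSolution (RS : (Fin k → F) → (Fin D → F)) (v : Fin k → Fin k → F) :
    #(cliqueSolution RS v) = D := by
  rw [cliqueSolution, card_image_of_injective _ fun _ _ h => congrArg Prod.fst h, card_univ,
    Fintype.card_fin]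

end CliqueSolution

section Reduction

variable {F : Type*} [Field F] [DecidableEq F] {k D : ℕ} {RS : (Fin k → F) → (Fin D → F)}
  {G : SimpleGraph (Fin k → F)} [DecidableRel G.Adj]

theorem thresholdFeasible_cliqueSolution
    (hRS : ∀ X : Finset (Fin D), #X = k → ∀ m m', (∀ j ∈ X, RS m j = RS m' j) → m = m')
    {v : Fin k → Fin k → F} (hv : ∀ a b, a ≠ b → G.Adj (v a) (v b)) :
    ThresholdFeasible F k D RS G (cliqueSolution RS v) := by
  refine ⟨fun j => card_le_one.mpr ?_, fun X hX a b hab u w huw => ?_⟩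
  · simp only [cliqueSolution, mem_filter, mem_image, mem_univ, true_and]
    rintro _ ⟨⟨i, rfl⟩, rfl⟩ _ ⟨⟨i', rfl⟩, hi'⟩
    simp_all
  · set agree := X.filter fun j => RS (v a) j = RS u j ∧ RS (v b) j = RS w j
    have hagree : agree ⊂ X := by
      refine (filter_subset _ _).ssubset_of_ne fun hall => huw ?_
      have h := filter_eq_self.mp hall
      rw [← hRS X hX _ _ fun j hj => (h j hj).1, ← hRS X hX _ _ fun j hj => (h j hj).2]
      exact hv a b hab.ne
    calc _ ≤ #(agree.image fun j => (j, fun a => RS (v a) j)) := by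
          refine card_le_card fun p hp => ?_
          simp only [cliqueSolution, mem_filter, mem_image, mem_univ, true_and] at hp
          obtain ⟨⟨j, rfl⟩, hjX, hja, hjb⟩ := hp
          exact mem_image.mpr ⟨j, mem_filter.mpr ⟨hjX, hja, hjb⟩, rfl⟩
      _ ≤ #agree := card_image_le
      _ ≤ k - 1 := by have := card_lt_card hagree; omega

theorem injOn_fst_of_thresholdFeasible {T : Finset (Fin D × (Fin k → F))}
    (hT : ThresholdFeasible F k D RS G T) : Set.InjOn Prod.fst (T : Set (Fin D × (Fin k → F))) :=
  fun p hp q hq hpq =>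
    card_le_one.mp (hT.1 p.1) p (mem_filter.mpr ⟨hp, rfl⟩) q (mem_filter.mpr ⟨hq, hpq.symm⟩)

theorem exists_clique_of_thresholdFeasible
    (hRS : ∀ X : Finset (Fin D), #X = k → ∀ c : Fin D → F, ∃ m, ∀ j ∈ X, RS m j = c j)
    {T : Finset (Fin D × (Fin k → F))} (hT : ThresholdFeasible F k D RS G T) (hTk : k ≤ #T) :
    ∃ v : Fin k → (Fin k → F), ∀ a b, a ≠ b → G.Adj (v a) (v b) := by
  obtain ⟨X, hXT, hX⟩ := exists_subset_card_eq
    (hTk.trans (card_image_of_injOn (injOn_fst_of_thresholdFeasible hT)).ge)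
  obtain ⟨g, hg⟩ := exists_mk_mem_of_subset_image_fst hXT
  choose v hv using fun a => hRS X hX fun j => g j a
  have hadj : ∀ a b, a < b → G.Adj (v a) (v b) := by
    intro a b hab
    by_contra hnadj
    have hsub : X.image (fun j => (j, g j)) ⊆
        T.filter fun p => p.1 ∈ X ∧ p.2 a = RS (v a) p.1 ∧ p.2 b = RS (v b) p.1 := by
      intro p hp
      obtain ⟨j, hj, rfl⟩ := mem_image.mp hp
      exact mem_filter.mpr ⟨hg j hj, hj, (hv a j hj).symm, (hv b j hj).symm⟩
    have hcard := (card_le_card hsub).trans (hT.2 X hX a b hab _ _ hnadj)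
    rw [card_image_of_injective _ fun _ _ h => congrArg Prod.fst h, hX] at hcard
    have := b.pos
    omega
  exact ⟨v, fun a b hab => hab.lt_or_gt.elim (hadj a b) fun h => (hadj b a h).symm⟩

end Reduction

theorem stmt_9_general (F : Type*) [Field F] [DecidableEq F] (k D : ℕ) (hkD : k ≤ D)
    (α : Fin D → F) (hα_inj : Function.Injective α) (hα_ne : ∀ i, α i ≠ 0)
    (RS : (Fin k → F) → (Fin D → F))
    (hRS : ∀ m i, RS m i = ∑ j : Fin k, (α i) ^ ((j : ℕ) + 1) * m j)
    (G : SimpleGraph (Fin k → F)) [DecidableRel G.Adj] :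
    ((∃ v : Fin k → (Fin k → F), ∀ a b, a ≠ b → G.Adj (v a) (v b)) ↔
      (∃ T : Finset (Fin D × (Fin k → F)),
        ThresholdFeasible F k D RS G T ∧ k ≤ T.card)) ∧
    ((∃ v : Fin k → (Fin k → F), ∀ a b, a ≠ b → G.Adj (v a) (v b)) →
      ∃ T : Finset (Fin D × (Fin k → F)),
        ThresholdFeasible F k D RS G T ∧ T.card = D) := by
  obtain rfl : RS = reedSolomon α k := funext₂ hRS
  have hsolution : (∃ v : Fin k → (Fin k → F), ∀ a b, a ≠ b → G.Adj (v a) (v b)) →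
      ∃ T, ThresholdFeasible F k D (reedSolomon α k) G T ∧ #T = D := fun ⟨v, hv⟩ =>
    ⟨cliqueSolution _ v,
      thresholdFeasible_cliqueSolution (fun _ hX _ _ => eq_of_reedSolomon_eq_on hα_inj hα_ne hX.ge) hv,
      card_cliqueSolution _ v⟩
  refine ⟨⟨fun h => ?_, fun ⟨T, hT, hTk⟩ => exists_clique_of_thresholdFeasible
    (fun _ hX => exists_reedSolomon_eq_on hα_inj hα_ne hX.le) hT hTk⟩, hsolution⟩
  obtain ⟨T, hT, hTD⟩ := hsolution h
  exact ⟨T, hT, hkD.trans hTD.ge⟩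

/-- For `2 ≤ k ≤ D`, a graph `G` on the vertex set `Fin k → F` has a
`k`-clique iff the associated Threshold Set instance has a feasible solution of
cardinality at least `k`; moreover, if `G` has a `k`-clique then there is a
feasible solution of cardinality exactly `D`. -/
theorem stmt_9 (F : Type*) [Field F] [DecidableEq F] (k D : ℕ) (hk : 2 ≤ k) (hkD : k ≤ D)
    (α : Fin D → F) (hα_inj : Function.Injective α) (hα_ne : ∀ i, α i ≠ 0)
    (RS : (Fin k → F) → (Fin D → F))
    (hRS : ∀ m i, RS m i = ∑ j : Fin k, (α i) ^ ((j : ℕ) + 1) * m j)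
    (G : SimpleGraph (Fin k → F)) [DecidableRel G.Adj] :
    ((∃ v : Fin k → (Fin k → F), ∀ a b, a ≠ b → G.Adj (v a) (v b)) ↔
      (∃ T : Finset (Fin D × (Fin k → F)),
        ThresholdFeasible F k D RS G T ∧ k ≤ T.card)) ∧
    ((∃ v : Fin k → (Fin k → F), ∀ a b, a ≠ b → G.Adj (v a) (v b)) →
      ∃ T : Finset (Fin D × (Fin k → F)),
        ThresholdFeasible F k D RS G T ∧ T.card = D) :=
  stmt_9_general F k D hkD α hα_inj hα_ne RS hRS G
end
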